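/- arXiv:1111.6900 — 2 statements merged into one kernel-verified Lean document; each statement's English description precedes it below -/
import Mathlib

section
/- (Correctness of the LAPACK-style permutation-vector representation.) For every permutation σ of Fin n there exists a function P : Fin n → Fin n with i ≤ P i for all i, such that σ equals the ordered product of transpositions swap(0, P 0) · swap(1, P 1) · ⋯ · swap(n−1, P (n−1)) (i.e., the product of the list [swap(i, P i)]_{i=0}^{n−1} taken in order of increasing i). Hence every permutation on n points can be stored as a vector P of length n and applied in-place as a sequence of swaps. -/
private def extPerm {n : ℕ} (e : Equiv.Perm (Fin n)) : Equiv.Perm (Fin (n + 1)) where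
  toFun := Fin.cases 0 (fun j => (e j).succ)
  invFun := Fin.cases 0 (fun j => (e.symm j).succ)
  left_inv i := by cases i using Fin.cases <;> simp
  right_inv i := by cases i using Fin.cases <;> simp

private def extHom (n : ℕ) : Equiv.Perm (Fin n) →* Equiv.Perm (Fin (n + 1)) where
  toFun := extPerm
  map_one' := by
    ext i; cases i using Fin.cases <;> simp [extPerm]
  map_mul' e f := by
    ext i; cases i using Fin.cases <;> simp [extPerm]

private lemma extHom_swap {n : ℕ} (a b : Fin n) :
    extHom n (Equiv.swap a b) = Equiv.swap a.succ b.succ := by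
  ext i
  cases i using Fin.cases with
  | zero =>
      simp [extHom, extPerm, Equiv.swap_apply_of_ne_of_ne (Fin.succ_ne_zero a).symm
        (Fin.succ_ne_zero b).symm]
  | succ j =>
      simp [extHom, extPerm, Equiv.swap_apply_def, Fin.succ_inj, apply_ite Fin.succ]

/-- **Correctness of the LAPACK-style permutation-vector representation.** Every
permutation `σ` of `Fin n` can be written as the ordered product of transpositions
`swap(0, P 0) * swap(1, P 1) * ⋯ * swap(n−1, P (n−1))` for some `P : Fin n → Fin n`
with `i ≤ P i` for all `i`. -/
theorem lapack_permutation_vector (n : ℕ) (σ : Equiv.Perm (Fin n)) :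
    ∃ P : Fin n → Fin n,
      (∀ i : Fin n, i ≤ P i) ∧
      σ = (List.ofFn (fun i : Fin n => Equiv.swap i (P i))).prod := by
  induction n with
  | zero =>
      exact ⟨fun i => i, fun i => le_rfl, Subsingleton.elim _ _⟩
  | succ n ih =>
      set p : Fin (n + 1) := (Equiv.Perm.decomposeFin σ).1 with hp
      set e : Equiv.Perm (Fin n) := (Equiv.Perm.decomposeFin σ).2 with he
      have hσ : σ = Equiv.Perm.decomposeFin.symm (p, e) := by
        rw [hp, he]; simp
      have hdec : Equiv.Perm.decomposeFin.symm (p, e) = Equiv.swap 0 p * extHom n e := by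
        ext i
        cases i using Fin.cases with
        | zero =>
            simp [extHom, extPerm]
        | succ j =>
            simp [extHom, extPerm, Equiv.Perm.decomposeFin_symm_apply_succ]
      obtain ⟨Q, hQ, hE⟩ := ih e
      refine ⟨Fin.cases p (fun i => (Q i).succ), ?_, ?_⟩
      · intro i
        cases i using Fin.cases with
        | zero => exact Fin.zero_le _
        | succ j => simpa [Fin.succ_le_succ_iff] using hQ j
      · rw [hσ, hdec, List.ofFn_succ]
        simp only [Fin.cases_zero, Fin.cases_succ, List.prod_cons]
        congr 1
        rw [hE]
        rw [map_list_prod (extHom n), List.map_ofFn]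
        congr 1
        exact congrArg List.ofFn (funext fun i => extHom_swap i (Q i))
end

section
/- (Correctness of Gaussian elimination to reduced row echelon form.) For every m×n matrix A over a field K there exist an invertible m×m matrix M over K, a natural number r ≤ min(m, n), and a strictly increasing function c : Fin r → Fin n such that the matrix R = M · A satisfies: for each i < r, R_{i, c_i} = 1, R_{k, c_i} = 0 for every k ≠ i, and R_{i, j} = 0 for all j < c_i; every row R_i with i ≥ r is identically zero; and r equals the rank of A. -/
/-!
Induct on the number of columns, keeping `M * A` in reduced row echelon form. If the new last
column vanishes below the `r` pivot rows it creates no pivot. Otherwise some invertible matrix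
(a row swap followed by a rank-one update) fixes every vector supported on the first `r` rows
and sends that column to the unit vector `e_r`; it leaves the earlier columns untouched and makes
the new column the `(r + 1)`-st pivot column. Since `M` is invertible, `rank A = rank (M * A)`,
and an RREF with `r` pivots has rank `r`: its nonzero rows lie among the first `r`, and its pivot
rows and columns form an identity submatrix.
-/

theorem Fin.strictMono_snoc {α : Type*} [Preorder α] {k : ℕ} {f : Fin k → α}
    (hf : StrictMono f) {x : α} (hx : ∀ i, f i < x) :
    StrictMono (Fin.snoc (α := fun _ => α) f x) := by
  intro a b hab
  induction b using Fin.lastCases with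
  | last =>
    obtain ⟨a, rfl⟩ := Fin.exists_castSucc_eq.2 hab.ne
    simpa using hx a
  | cast b =>
    obtain ⟨a, rfl⟩ := Fin.exists_castSucc_eq.2 (hab.trans (Fin.castSucc_lt_last b)).ne
    simpa using hf (Fin.castSucc_lt_castSucc_iff.mp hab)

namespace Matrix

section RankOneUpdate

variable {ι K : Type*} [Fintype ι] [DecidableEq ι]

theorem one_add_replicateCol_mul_replicateRow_mulVec [CommRing K] (u w v : ι → K) :
    (1 + replicateCol Unit u * replicateRow Unit w) *ᵥ v = v + (w ⬝ᵥ v) • u := by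
  rw [add_mulVec, one_mulVec, ← mulVec_mulVec, replicateRow_mulVec_eq_const]
  ext k
  simp [mulVec, dotProduct, mul_comm]

theorem isUnit_one_add_replicateCol_mul_replicateRow [CommRing K] {u w : ι → K}
    (h : IsUnit (1 + w ⬝ᵥ u)) : IsUnit (1 + replicateCol Unit u * replicateRow Unit w) := by
  rwa [isUnit_iff_isUnit_det, det_one_add_replicateCol_mul_replicateRow]

variable [Field K]

theorem exists_isUnit_mulVec_eq_single_of_apply_ne_zero {b : ι → K} {q : ι} (hb : b q ≠ 0) :
    ∃ E : Matrix ι ι K, IsUnit E ∧ E *ᵥ b = Pi.single q 1 ∧ ∀ v, v q = 0 → E *ᵥ v = v := by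
  set u := (b q)⁻¹ • (Pi.single q 1 - b)
  refine ⟨1 + replicateCol Unit u * replicateRow Unit (Pi.single q 1),
    isUnit_one_add_replicateCol_mul_replicateRow ?_, ?_, fun v hv => ?_⟩
  · simp [u, single_dotProduct, mul_sub, hb]
  · rw [one_add_replicateCol_mul_replicateRow_mulVec, single_dotProduct, one_mul, smul_smul,
      mul_inv_cancel₀ hb, one_smul, add_sub_cancel]
  · rw [one_add_replicateCol_mul_replicateRow_mulVec, single_dotProduct, hv, mul_zero, zero_smul,
      add_zero]

theorem exists_isUnit_mulVec_eq_single {b : ι → K} {p : ι} (hb : b p ≠ 0) (q : ι) :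
    ∃ E : Matrix ι ι K, IsUnit E ∧ E *ᵥ b = Pi.single q 1 ∧
      ∀ v, v p = 0 → v q = 0 → E *ᵥ v = v := by
  set P := (Equiv.swap p q).permMatrix K
  obtain ⟨S, hS, hSb, hSv⟩ := exists_isUnit_mulVec_eq_single_of_apply_ne_zero (b := P *ᵥ b)
    (q := q) (by simpa [P, permMatrix_mulVec] using hb)
  have hP : IsUnit P := by
    rw [isUnit_iff_isUnit_det, det_permutation]
    exact (Equiv.Perm.sign _).isUnit.map (Int.castRingHom K)
  refine ⟨S * P, hS.mul hP, by rw [← mulVec_mulVec, hSb], fun v hp hq => ?_⟩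
  have hPv : P *ᵥ v = v := by
    ext k
    rw [permMatrix_mulVec, Function.comp_apply]
    rcases eq_or_ne k p with rfl | hkp
    · simp [hp, hq]
    rcases eq_or_ne k q with rfl | hkq
    · simp [hp, hq]
    · rw [Equiv.swap_apply_of_ne_of_ne hkp hkq]
  rw [← mulVec_mulVec, hPv, hSv v hq]

end RankOneUpdate

section ReducedRowEchelon

variable {α : Type*} {m n r : ℕ}

/-- `R` is in reduced row echelon form with the `r` pivots of its rows `0, …, r - 1` in the
columns `c 0 < … < c (r - 1)`. -/
structure IsRREF [Zero α] [One α] (R : Matrix (Fin m) (Fin n) α) (hr : r ≤ m)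
    (c : Fin r → Fin n) : Prop where
  strictMono : StrictMono c
  apply_pivot (i : Fin r) (k : Fin m) : R k (c i) = if k = Fin.castLE hr i then 1 else 0
  apply_of_lt_pivot (i : Fin r) (j : Fin n) : j < c i → R (Fin.castLE hr i) j = 0
  row_eq_zero (k : Fin m) : r ≤ k → R k = 0

theorem isRREF_of_width_zero [Zero α] [One α] (R : Matrix (Fin m) (Fin 0) α) :
    IsRREF R m.zero_le Fin.elim0 where
  strictMono i := i.elim0
  apply_pivot i := i.elim0
  apply_of_lt_pivot i := i.elim0
  row_eq_zero _ _ := funext fun j => j.elim0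

namespace IsRREF

variable {R : Matrix (Fin m) (Fin n) α} {hr : r ≤ m} {c : Fin r → Fin n}

theorem apply_eq_zero_of_le [Zero α] [One α] (h : IsRREF R hr c) {k : Fin m} (hk : r ≤ k)
    (j : Fin n) : R k j = 0 :=
  congrFun (h.row_eq_zero k hk) j

theorem mul_eq_self [Semiring α] (h : IsRREF R hr c) {E : Matrix (Fin m) (Fin m) α}
    (hE : ∀ v : Fin m → α, (∀ k : Fin m, r ≤ k → v k = 0) → E *ᵥ v = v) : E * R = R := by
  ext k j
  exact congrFun (hE (R.col j) fun k hk => h.apply_eq_zero_of_le hk j) k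

theorem rank_eq [CommSemiring α] [StrongRankCondition α] (h : IsRREF R hr c) : R.rank = r := by
  refine le_antisymm ?_ ?_
  · calc R.rank ≤ (Finset.univ.map (Fin.castLEEmb hr)).card :=
          R.rank_le_card_of_support_subset _ fun k hk => ?_
      _ = r := by simp
    by_contra hk'
    refine hk (h.row_eq_zero k (not_lt.1 fun hkr => hk' ?_))
    exact Finset.mem_map.2 ⟨⟨k, hkr⟩, Finset.mem_univ _, rfl⟩
  · have hsub : R.submatrix (Fin.castLE hr) c = 1 := by
      ext i j
      simp [h.apply_pivot, one_apply, Fin.castLE_inj]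
    calc r = (R.submatrix (Fin.castLE hr) c).rank := by simp [hsub]
      _ ≤ R.rank := R.rank_submatrix_le _ _

end IsRREF

variable [Zero α] [One α] {R : Matrix (Fin m) (Fin (n + 1)) α} {c : Fin r → Fin n}

theorem isRREF_of_init_of_last_eq_zero {hr : r ≤ m}
    (h : IsRREF (R.submatrix id Fin.castSucc) hr c)
    (hlast : ∀ k : Fin m, r ≤ k → R k (Fin.last n) = 0) :
    IsRREF R hr (Fin.castSucc ∘ c) where
  strictMono := Fin.strictMono_castSucc.comp h.strictMono
  apply_pivot := h.apply_pivot
  apply_of_lt_pivot i j hj := by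
    induction j using Fin.lastCases with
    | last => exact absurd hj (not_lt.2 (Fin.le_last _))
    | cast j => exact h.apply_of_lt_pivot i j (Fin.castSucc_lt_castSucc_iff.mp hj)
  row_eq_zero k hk := by
    ext j
    induction j using Fin.lastCases with
    | last => exact hlast k hk
    | cast j => exact h.apply_eq_zero_of_le hk j

theorem isRREF_of_init_of_last_eq_single (hr : r + 1 ≤ m)
    (h : IsRREF (R.submatrix id Fin.castSucc) (Nat.le_of_succ_le hr) c)
    (hlast : R.col (Fin.last n) = Pi.single ⟨r, hr⟩ 1) :
    IsRREF R hr (Fin.snoc (Fin.castSucc ∘ c) (Fin.last n)) where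
  strictMono := Fin.strictMono_snoc (Fin.strictMono_castSucc.comp h.strictMono)
    fun i => Fin.castSucc_lt_last (c i)
  apply_pivot i k := by
    induction i using Fin.lastCases with
    | last =>
      rw [Fin.snoc_last, ← R.col_apply, hlast, Pi.single_apply]
      rfl
    | cast i =>
      rw [Fin.snoc_castSucc]
      exact h.apply_pivot i k
  apply_of_lt_pivot i j hj := by
    induction i using Fin.lastCases with
    | last =>
      rw [Fin.snoc_last] at hj
      obtain ⟨j, rfl⟩ := Fin.exists_castSucc_eq.2 hj.ne
      exact h.apply_eq_zero_of_le (k := ⟨r, hr⟩) le_rfl j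
    | cast i =>
      rw [Fin.snoc_castSucc] at hj
      obtain ⟨j, rfl⟩ := Fin.exists_castSucc_eq.2 (hj.trans (Fin.castSucc_lt_last _)).ne
      exact h.apply_of_lt_pivot i j (Fin.castSucc_lt_castSucc_iff.mp hj)
  row_eq_zero k hk := by
    ext j
    induction j using Fin.lastCases with
    | last =>
      rw [← R.col_apply, hlast, Pi.single_apply, if_neg (fun hkr => by simp [hkr] at hk)]
      rfl
    | cast j => exact h.apply_eq_zero_of_le (Nat.le_of_succ_le hk) j

end ReducedRowEchelon

theorem exists_isUnit_isRREF_mul {K : Type*} [Field K] {m n : ℕ}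
    (A : Matrix (Fin m) (Fin n) K) :
    ∃ M : Matrix (Fin m) (Fin m) K, IsUnit M ∧ ∃ r, ∃ hr : r ≤ m, ∃ c : Fin r → Fin n,
      IsRREF (M * A) hr c := by
  induction n with
  | zero => exact ⟨1, isUnit_one, 0, m.zero_le, Fin.elim0, isRREF_of_width_zero _⟩
  | succ n ih =>
    obtain ⟨M, hM, r, hr, c, hinit⟩ := ih (A.submatrix id Fin.castSucc)
    change IsRREF ((M * A).submatrix id Fin.castSucc) hr c at hinit
    by_cases hlast : ∀ k : Fin m, r ≤ k → (M * A) k (Fin.last n) = 0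
    · exact ⟨M, hM, r, hr, _, isRREF_of_init_of_last_eq_zero hinit hlast⟩
    push Not at hlast
    obtain ⟨p, hp, hb⟩ := hlast
    have hrm : r + 1 ≤ m := hp.trans_lt p.isLt
    obtain ⟨E, hE, hEb, hEv⟩ :=
      exists_isUnit_mulVec_eq_single (b := (M * A).col (Fin.last n)) hb ⟨r, hrm⟩
    have hEM : (E * M * A).submatrix id Fin.castSucc = (M * A).submatrix id Fin.castSucc := by
      rw [Matrix.mul_assoc]
      exact hinit.mul_eq_self fun v hv => hEv v (hv p hp) (hv _ le_rfl)
    refine ⟨E * M, hE.mul hM, r + 1, hrm, Fin.snoc (Fin.castSucc ∘ c) (Fin.last n),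
      isRREF_of_init_of_last_eq_single hrm ?_ ?_⟩
    · rwa [hEM]
    · rw [Matrix.mul_assoc]
      exact hEb

end Matrix

/-- **Correctness of Gaussian elimination to reduced row echelon form.** For every
matrix `A` over a field there is an invertible matrix `M` such that `M * A` is in
reduced row echelon form with `r = rank A` pivots in strictly increasing columns. -/
theorem gaussian_elimination_rref (K : Type*) [Field K] (m n : ℕ)
    (A : Matrix (Fin m) (Fin n) K) :
    ∃ (M : Matrix (Fin m) (Fin m) K), IsUnit M ∧
      ∃ (r : ℕ) (hr : r ≤ min m n) (c : Fin r → Fin n), StrictMono c ∧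
        (∀ i : Fin r,
          (M * A) (Fin.castLE (hr.trans (min_le_left m n)) i) (c i) = 1 ∧
          (∀ k : Fin m, k ≠ Fin.castLE (hr.trans (min_le_left m n)) i →
            (M * A) k (c i) = 0) ∧
          (∀ j : Fin n, j < c i →
            (M * A) (Fin.castLE (hr.trans (min_le_left m n)) i) j = 0)) ∧
        (∀ i : Fin m, r ≤ (i : ℕ) → (M * A) i = 0) ∧
        A.rank = r := by
  obtain ⟨M, hM, r, hrm, c, hR⟩ := Matrix.exists_isUnit_isRREF_mul A
  have hr : r ≤ min m n := le_min hrm (Fin.le_of_injective c hR.strictMono.injective)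
  refine ⟨M, hM, r, hr, c, hR.strictMono,
    fun i => ⟨?_, fun k hk => ?_, hR.apply_of_lt_pivot i⟩, hR.row_eq_zero, ?_⟩
  · simpa using hR.apply_pivot i (Fin.castLE hrm i)
  · simpa [hk] using hR.apply_pivot i k
  · rw [← Matrix.rank_mul_eq_right_of_isUnit_det M A ((Matrix.isUnit_iff_isUnit_det M).mp hM),
    hR.rank_eq]
end
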